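/- arXiv:2509.22860 — 4 statements merged into one kernel-verified Lean document; each statement's English description precedes it below -/
import Mathlib

section
/- Let n ≥ 1 and let f_1, …, f_n : ℝ^d → ℝ be differentiable functions such that each ∇f_i is L_i-Lipschitz for some L_i ≥ 0, and let f := (1/n)∑_{i=1}^n f_i. Then for all x, y_1, …, y_n ∈ ℝ^d, ‖∇f(x) − (1/n)∑_{i=1}^n ∇f_i(y_i)‖² ≤ ((1/n)∑_{i=1}^n L_i²) · (1/n)∑_{i=1}^n ‖x − y_i‖²; that is, the generalized smoothness condition holds with constant L = √((1/n)∑_{i=1}^n L_i²). -/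
section Gradient

variable {F : Type*} [NormedAddCommGroup F] [InnerProductSpace ℝ F] [CompleteSpace F]

theorem HasGradientAt.fun_sum {ι : Type*} {s : Finset ι} {f : ι → F → ℝ} {f' : ι → F} {x : F}
    (h : ∀ i ∈ s, HasGradientAt (f i) (f' i) x) :
    HasGradientAt (fun z => ∑ i ∈ s, f i z) (∑ i ∈ s, f' i) x := by
  rw [hasGradientAt_iff_hasFDerivAt, map_sum]
  exact HasFDerivAt.fun_sum fun i hi => (h i hi).hasFDerivAt

theorem HasGradientAt.const_mul {f : F → ℝ} {f' x : F} (h : HasGradientAt f f' x) (c : ℝ) :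
    HasGradientAt (fun z => c * f z) (c • f') x := by
  rw [hasGradientAt_iff_hasFDerivAt, map_smulₛₗ, starRingEnd_apply, star_trivial]
  exact h.hasFDerivAt.const_mul c

end Gradient

theorem norm_sum_sq_le_sum_sq_mul_sum_sq {G ι : Type*} [SeminormedAddCommGroup G]
    (s : Finset ι) {v : ι → G} {a b : ι → ℝ} (hv : ∀ i ∈ s, ‖v i‖ ≤ a i * b i) :
    ‖∑ i ∈ s, v i‖ ^ 2 ≤ (∑ i ∈ s, a i ^ 2) * ∑ i ∈ s, b i ^ 2 := by
  have hsum : ‖∑ i ∈ s, v i‖ ≤ ∑ i ∈ s, a i * b i :=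
    (norm_sum_le _ _).trans (Finset.sum_le_sum hv)
  calc ‖∑ i ∈ s, v i‖ ^ 2 ≤ (∑ i ∈ s, a i * b i) ^ 2 := by gcongr
    _ ≤ (∑ i ∈ s, a i ^ 2) * ∑ i ∈ s, b i ^ 2 := Finset.sum_mul_sq_le_sq_mul_sq _ _ _

theorem lipschitz_gradients_imply_generalized_smoothness_general
    (d n : ℕ)
    (f : Fin n → EuclideanSpace ℝ (Fin d) → ℝ)
    (hdiff : ∀ i, Differentiable ℝ (f i))
    (L : Fin n → ℝ)
    (hlip : ∀ i, ∀ x y : EuclideanSpace ℝ (Fin d),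
      ‖gradient (f i) x - gradient (f i) y‖ ≤ L i * ‖x - y‖) :
    ∀ (x : EuclideanSpace ℝ (Fin d)) (y : Fin n → EuclideanSpace ℝ (Fin d)),
      ‖gradient (fun z => (1 / (n : ℝ)) * ∑ i, f i z) x
          - (1 / (n : ℝ)) • ∑ i, gradient (f i) (y i)‖ ^ 2
        ≤ ((1 / (n : ℝ)) * ∑ i, (L i) ^ 2) * ((1 / (n : ℝ)) * ∑ i, ‖x - y i‖ ^ 2) := by
  intro x y
  have hgrad : gradient (fun z => (1 / (n : ℝ)) * ∑ i, f i z) x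
      = (1 / (n : ℝ)) • ∑ i, gradient (f i) x :=
    ((HasGradientAt.fun_sum fun i _ => (hdiff i x).hasGradientAt).const_mul _).gradient
  rw [hgrad, ← smul_sub, ← Finset.sum_sub_distrib, norm_smul, mul_pow, Real.norm_eq_abs, sq_abs]
  calc (1 / (n : ℝ)) ^ 2 * ‖∑ i, (gradient (f i) x - gradient (f i) (y i))‖ ^ 2
      ≤ (1 / (n : ℝ)) ^ 2 * ((∑ i, L i ^ 2) * ∑ i, ‖x - y i‖ ^ 2) := by
        gcongr
        exact norm_sum_sq_le_sum_sq_mul_sum_sq _ fun i _ => hlip i x (y i)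
    _ = ((1 / (n : ℝ)) * ∑ i, L i ^ 2) * ((1 / (n : ℝ)) * ∑ i, ‖x - y i‖ ^ 2) := by ring

/-- If each `∇f_i` is `L_i`-Lipschitz, then the generalized smoothness
condition holds with constant `L = √((1/n)∑ L_i²)` for the average `f`. -/
theorem lipschitz_gradients_imply_generalized_smoothness
    (d n : ℕ) (hn : 1 ≤ n)
    (f : Fin n → EuclideanSpace ℝ (Fin d) → ℝ)
    (hdiff : ∀ i, Differentiable ℝ (f i))
    (L : Fin n → ℝ) (hL : ∀ i, 0 ≤ L i)
    (hlip : ∀ i, ∀ x y : EuclideanSpace ℝ (Fin d),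
      ‖gradient (f i) x - gradient (f i) y‖ ≤ L i * ‖x - y‖) :
    ∀ (x : EuclideanSpace ℝ (Fin d)) (y : Fin n → EuclideanSpace ℝ (Fin d)),
      ‖gradient (fun z => (1 / (n : ℝ)) * ∑ i, f i z) x
          - (1 / (n : ℝ)) • ∑ i, gradient (f i) (y i)‖ ^ 2
        ≤ ((1 / (n : ℝ)) * ∑ i, (L i) ^ 2) * ((1 / (n : ℝ)) * ∑ i, ‖x - y i‖ ^ 2) :=
  lipschitz_gradients_imply_generalized_smoothness_general d n f hdiff L hlip
end

section
/- Let n ≥ 1 and K ≥ 1 be integers, and let γ > 0, L > 0, σ² ≥ 0, B > 0 be reals with γ ≤ 1/(4nL). Let s : ℕ → ℝ be a nonnegative sequence, let d : {1,…,n} × ℕ → ℕ satisfy d_i^k ≤ 2n and d_i^k ≤ k for all i and k, and let r : {1,…,n} × ℕ → ℝ be nonnegative numbers satisfying r_i^k ≤ 2γ² d_i^k ∑_{ℓ = k − d_i^k}^{k−1} s_ℓ + 2γ² (d_i^k)² σ²/(Bn) for all i ∈ {1,…,n} and k ∈ ℕ. Then (1/K) ∑_{k=0}^{K−1} (1/n)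 ∑_{i=1}^n r_i^k ≤ (2γn/(LK)) ∑_{k=0}^{K−1} s_k + 2γσ²/(LB). -/
/-!
Each residual is controlled by a window of at most `2n` consecutive values of `s`, with a
coefficient `2γ²d ≤ 4γ²n ≤ γ / L` thanks to the step-size condition `4γnL ≤ 1`; the same
coefficient absorbs the variance term. Summing over `k`, every `s ℓ` lies in at most `2n`
windows, which turns the window sums into `2n ∑ s`.
-/

open Finset

/-- Every index `ℓ < K` lies in at most `m` of the windows `[k - m, k)`, `k < K`. -/
theorem sum_range_sum_Ico_sub_le {M : Type*} [AddCommMonoid M] [PartialOrder M]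
    [IsOrderedAddMonoid M] (K m : ℕ) {s : ℕ → M} (hs : ∀ ℓ, 0 ≤ s ℓ) :
    ∑ k ∈ range K, ∑ ℓ ∈ Ico (k - m) k, s ℓ ≤ m • ∑ ℓ ∈ range K, s ℓ := by
  rw [sum_comm' (t' := range K) (s' := fun ℓ ↦ (Ioc ℓ (ℓ + m)).filter (· < K))
    (fun k ℓ ↦ by simp only [mem_range, mem_Ico, mem_filter, mem_Ioc]; omega), smul_sum]
  refine sum_le_sum fun ℓ _ ↦ ?_
  rw [sum_const]
  refine nsmul_le_nsmul_left (hs ℓ) ((card_filter_le _ _).trans ?_)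
  rw [Nat.card_Ioc]
  omega

section DelayedStep

variable {γ L : ℝ} {n d : ℕ}

theorem two_mul_sq_mul_delay_le (hγ : 0 ≤ γ) (hL : 0 < L) (hγn : γ * (4 * n * L) ≤ 1)
    (hd : d ≤ 2 * n) : 2 * γ ^ 2 * d ≤ γ / L := by
  rw [le_div_iff₀ hL]
  calc 2 * γ ^ 2 * d * L ≤ 2 * γ ^ 2 * (2 * n) * L := by gcongr; exact_mod_cast hd
    _ = γ * (γ * (4 * n * L)) := by ring
    _ ≤ γ := mul_le_of_le_one_right hγ hγn

theorem le_window_of_le_delayed {σ2 B r : ℝ} {s : ℕ → ℝ} {k : ℕ} (hn : 0 < n)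
    (hγ : 0 ≤ γ) (hL : 0 < L) (hσ : 0 ≤ σ2) (hB : 0 < B) (hγn : γ * (4 * n * L) ≤ 1)
    (hs : ∀ ℓ, 0 ≤ s ℓ) (hd : d ≤ 2 * n)
    (hr : r ≤ 2 * γ ^ 2 * d * ∑ ℓ ∈ Ico (k - d) k, s ℓ + 2 * γ ^ 2 * (d : ℝ) ^ 2 * σ2 / (B * n)) :
    r ≤ γ / L * ∑ ℓ ∈ Ico (k - 2 * n) k, s ℓ + 2 * γ * σ2 / (L * B) := by
  have hcoef := two_mul_sq_mul_delay_le hγ hL hγn hd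
  have hd' : (d : ℝ) ≤ 2 * n := by exact_mod_cast hd
  have hwindow : ∑ ℓ ∈ Ico (k - d) k, s ℓ ≤ ∑ ℓ ∈ Ico (k - 2 * n) k, s ℓ :=
    sum_le_sum_of_subset_of_nonneg (Ico_subset_Ico (by omega) le_rfl) fun ℓ _ _ ↦ hs ℓ
  calc r ≤ 2 * γ ^ 2 * d * ∑ ℓ ∈ Ico (k - d) k, s ℓ + 2 * γ ^ 2 * d * (d * σ2 / (B * n)) := by
        convert hr using 2; ring
    _ ≤ γ / L * ∑ ℓ ∈ Ico (k - 2 * n) k, s ℓ + γ / L * (2 * n * σ2 / (B * n)) := by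
        have hwindow_nonneg : 0 ≤ ∑ ℓ ∈ Ico (k - d) k, s ℓ := sum_nonneg fun ℓ _ ↦ hs ℓ
        gcongr
    _ = γ / L * ∑ ℓ ∈ Ico (k - 2 * n) k, s ℓ + 2 * γ * σ2 / (L * B) := by
        field_simp

end DelayedStep

theorem residual_estimation_general
    (n K : ℕ) (hn : 1 ≤ n) (hK : 1 ≤ K)
    (γ L σ2 B : ℝ) (hγ : 0 < γ) (hL : 0 < L) (hσ : 0 ≤ σ2) (hB : 0 < B)
    (hγle : γ ≤ 1 / (4 * n * L))
    (s : ℕ → ℝ) (hs : ∀ k, 0 ≤ s k)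
    (dl : Fin n → ℕ → ℕ)
    (hdl1 : ∀ i k, dl i k ≤ 2 * n)
    (r : Fin n → ℕ → ℝ)
    (hr : ∀ (i : Fin n) (k : ℕ),
      r i k ≤ 2 * γ ^ 2 * (dl i k : ℝ) * ∑ ℓ ∈ Finset.Ico (k - dl i k) k, s ℓ
        + 2 * γ ^ 2 * (dl i k : ℝ) ^ 2 * σ2 / (B * n)) :
    (1 / (K : ℝ)) * ∑ k ∈ Finset.range K, (1 / (n : ℝ)) * ∑ i : Fin n, r i k
      ≤ (2 * γ * n / (L * K)) * ∑ k ∈ Finset.range K, s k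
        + 2 * γ * σ2 / (L * B) := by
  have hn0 : (0 : ℝ) < n := by exact_mod_cast hn
  have hγn : γ * (4 * n * L) ≤ 1 := (le_div_iff₀ (by positivity)).mp hγle
  set c := 2 * γ * σ2 / (L * B)
  have havg : ∀ k, 1 / (n : ℝ) * ∑ i : Fin n, r i k ≤ γ / L * ∑ ℓ ∈ Ico (k - 2 * n) k, s ℓ + c := by
    intro k
    have hsum := sum_le_card_nsmul univ (r · k) _ fun i _ ↦
      le_window_of_le_delayed hn hγ.le hL hσ hB hγn hs (hdl1 i k) (hr i k)
    rw [card_univ, Fintype.card_fin, nsmul_eq_mul] at hsum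
    rw [div_mul_eq_mul_div, one_mul, div_le_iff₀' hn0]
    exact hsum
  calc 1 / (K : ℝ) * ∑ k ∈ range K, 1 / (n : ℝ) * ∑ i : Fin n, r i k
      ≤ 1 / K * ∑ k ∈ range K, (γ / L * ∑ ℓ ∈ Ico (k - 2 * n) k, s ℓ + c) := by
        gcongr with k; exact havg k
    _ = 1 / K * (γ / L * ∑ k ∈ range K, ∑ ℓ ∈ Ico (k - 2 * n) k, s ℓ + K * c) := by
        rw [sum_add_distrib, ← mul_sum, sum_const, card_range, nsmul_eq_mul]
    _ ≤ 1 / K * (γ / L * ((2 * n) • ∑ k ∈ range K, s k) + K * c) := by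
        gcongr; exact sum_range_sum_Ico_sub_le K (2 * n) hs
    _ = 2 * γ * n / (L * K) * ∑ k ∈ range K, s k + c := by
        have hK0 : (K : ℝ) ≠ 0 := by exact_mod_cast (by omega : K ≠ 0)
        rw [nsmul_eq_mul]; push_cast; field_simp

/-- Abstract residual-estimation inequality of asynchronous SGD. -/
theorem residual_estimation
    (n K : ℕ) (hn : 1 ≤ n) (hK : 1 ≤ K)
    (γ L σ2 B : ℝ) (hγ : 0 < γ) (hL : 0 < L) (hσ : 0 ≤ σ2) (hB : 0 < B)
    (hγle : γ ≤ 1 / (4 * n * L))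
    (s : ℕ → ℝ) (hs : ∀ k, 0 ≤ s k)
    (dl : Fin n → ℕ → ℕ)
    (hdl1 : ∀ i k, dl i k ≤ 2 * n) (hdl2 : ∀ i k, dl i k ≤ k)
    (r : Fin n → ℕ → ℝ) (hr0 : ∀ i k, 0 ≤ r i k)
    (hr : ∀ (i : Fin n) (k : ℕ),
      r i k ≤ 2 * γ ^ 2 * (dl i k : ℝ) * ∑ ℓ ∈ Finset.Ico (k - dl i k) k, s ℓ
        + 2 * γ ^ 2 * (dl i k : ℝ) ^ 2 * σ2 / (B * n)) :
    (1 / (K : ℝ)) * ∑ k ∈ Finset.range K, (1 / (n : ℝ)) * ∑ i : Fin n, r i k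
      ≤ (2 * γ * n / (L * K)) * ∑ k ∈ Finset.range K, s k
        + 2 * γ * σ2 / (L * B) :=
  residual_estimation_general n K hn hK γ L σ2 B hγ hL hσ hB hγle s hs dl hdl1 r hr
end

section
/- Let n ≥ 1 and K ≥ 1 be integers, and let γ > 0, L > 0, σ² ≥ 0, B > 0, F_* ∈ ℝ be reals with γ ≤ 1/(8nL). Let F : ℕ → ℝ satisfy F_k ≥ F_* for all k, and let a, G, R : ℕ → ℝ be nonnegative sequences such that: (i) for all k with 0 ≤ k ≤ K−1, F_{k+1} ≤ F_k − (γ/2) a_k − (γ/4) G_k + (γL²/2) R_k + 3γ²Lσ²/(2B) + γ²L ∑_{ℓ = k − (k mod n)}^{k−1} G_ℓ; and (ii) (1/K) ∑_{k=0}^{K−1} R_k ≤ (2γn/(LK)) ∑_{k=0}^{K−1} G_k + 2γσ²/(LB). Then (1/K) ∑_{k=0}^{K−1} a_k ≤ 2(F_0 − F_*)/(γK) + 5γLσ²/B. -/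
/-!
Summing the descent inequality telescopes `F`, and `F_K ≥ F_*` bounds the left-hand side.
Each `G_ℓ` lies in fewer than `n` of the windows `[k - k mod n, k)`, so the window terms cost at
most `γ²Ln ∑ G`; the residual bound (ii) costs another `γ²Ln ∑ G` plus noise. The step-size
condition `8γnL ≤ 1` lets the `-(γ/4) G_k` terms absorb both, leaving the noise
`(3/2 + 1) Kγ²Lσ²/B`.
-/

open Finset

theorem sum_sum_le_mul_sum_of_card_le {R ι κ : Type*} [CommSemiring R] [PartialOrder R]
    [IsOrderedRing R] [DecidableEq κ] (s : Finset ι) (t : ι → Finset κ) (u : Finset κ)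
    (G : κ → R) (m : ℕ)
    (hG : ∀ ℓ ∈ u, 0 ≤ G ℓ) (htu : ∀ k ∈ s, t k ⊆ u)
    (hcard : ∀ ℓ ∈ u, #{k ∈ s | ℓ ∈ t k} ≤ m) :
    ∑ k ∈ s, ∑ ℓ ∈ t k, G ℓ ≤ m * ∑ ℓ ∈ u, G ℓ := by
  rw [sum_comm' (t' := u) (s' := fun ℓ => {k ∈ s | ℓ ∈ t k})
    (fun k ℓ => by simp only [mem_filter]; grind), mul_sum]
  refine sum_le_sum fun ℓ hℓ => ?_
  rw [sum_const, nsmul_eq_mul]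
  exact mul_le_mul_of_nonneg_right (Nat.mono_cast (hcard ℓ hℓ)) (hG ℓ hℓ)

theorem card_filter_mem_Ico_sub_mod_le (s : Finset ℕ) {n : ℕ} (hn : 1 ≤ n) (ℓ : ℕ) :
    #{k ∈ s | ℓ ∈ Ico (k - k % n) k} ≤ n := by
  have hsub : {k ∈ s | ℓ ∈ Ico (k - k % n) k} ⊆ Ico (ℓ + 1) (ℓ + n) := by
    intro k hk
    have := Nat.mod_lt k hn
    have := Nat.mod_le k n
    simp only [mem_filter, mem_Ico] at hk ⊢
    omega
  exact (card_le_card hsub).trans (by simp; omega)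

theorem sum_sum_Ico_sub_mod_le {R : Type*} [CommSemiring R] [PartialOrder R] [IsOrderedRing R]
    {n : ℕ} (hn : 1 ≤ n) (K : ℕ) (G : ℕ → R) (hG : ∀ k, 0 ≤ G k) :
    ∑ k ∈ range K, ∑ ℓ ∈ Ico (k - k % n) k, G ℓ ≤ n * ∑ k ∈ range K, G k :=
  sum_sum_le_mul_sum_of_card_le _ _ _ G n (fun ℓ _ => hG ℓ)
    (fun k hk ℓ hℓ => by simp only [mem_Ico, mem_range] at hk hℓ ⊢; omega)
    (fun ℓ _ => card_filter_mem_Ico_sub_mod_le _ hn ℓ)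

theorem le_add_sum_range_of_succ_le {M : Type*} [AddCommGroup M] [PartialOrder M]
    [IsOrderedAddMonoid M]
    (F d : ℕ → M) (K : ℕ) (h : ∀ k < K, F (k + 1) ≤ F k + d k) :
    F K ≤ F 0 + ∑ k ∈ range K, d k := by
  rw [← sub_le_iff_le_add', ← sum_range_sub]
  exact sum_le_sum fun k hk => sub_le_iff_le_add'.mpr (h k (mem_range.mp hk))

theorem abstract_convergence_general
    (n K : ℕ) (hn : 1 ≤ n) (hK : 1 ≤ K)
    (γ L σ2 B Fstar : ℝ) (hγ : 0 < γ) (hL : 0 < L)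
    (hγle : γ ≤ 1 / (8 * n * L))
    (F a G R : ℕ → ℝ)
    (hF : ∀ k, Fstar ≤ F k)
    (hG : ∀ k, 0 ≤ G k)
    (hdesc : ∀ k, k ≤ K - 1 →
      F (k + 1) ≤ F k - (γ / 2) * a k - (γ / 4) * G k + (γ * L ^ 2 / 2) * R k
        + 3 * γ ^ 2 * L * σ2 / (2 * B)
        + γ ^ 2 * L * ∑ ℓ ∈ Finset.Ico (k - k % n) k, G ℓ)
    (hres : (1 / (K : ℝ)) * ∑ k ∈ Finset.range K, R k
      ≤ (2 * γ * n / (L * K)) * ∑ k ∈ Finset.range K, G k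
        + 2 * γ * σ2 / (L * B)) :
    (1 / (K : ℝ)) * ∑ k ∈ Finset.range K, a k
      ≤ 2 * (F 0 - Fstar) / (γ * K) + 5 * γ * L * σ2 / B := by
  have hK0 : (0 : ℝ) < K := by exact_mod_cast hK
  set SG := ∑ k ∈ range K, G k
  set SR := ∑ k ∈ range K, R k
  set T := ∑ k ∈ range K, ∑ ℓ ∈ Ico (k - k % n) k, G ℓ
  have hdesc_sum : Fstar ≤ F 0 - γ / 2 * ∑ k ∈ range K, a k - γ / 4 * SG + γ * L ^ 2 / 2 * SR
      + K * (3 * γ ^ 2 * L * σ2 / (2 * B)) + γ ^ 2 * L * T := by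
    have htel := le_add_sum_range_of_succ_le F (fun k => -(γ / 2) * a k - γ / 4 * G k
      + γ * L ^ 2 / 2 * R k + 3 * γ ^ 2 * L * σ2 / (2 * B)
      + γ ^ 2 * L * ∑ ℓ ∈ Ico (k - k % n) k, G ℓ) K fun k hk => by linarith [hdesc k (by omega)]
    simp only [sum_add_distrib, sum_sub_distrib, ← mul_sum, sum_const, card_range,
      nsmul_eq_mul] at htel
    linarith [hF K]
  have hT : T ≤ n * SG := sum_sum_Ico_sub_mod_le hn K G hG
  have hSR : γ * L ^ 2 / 2 * SR ≤ γ ^ 2 * L * n * SG + K * (γ ^ 2 * L * σ2 / B) := calc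
    γ * L ^ 2 / 2 * SR = K * γ * L ^ 2 / 2 * (1 / K * SR) := by field_simp
    _ ≤ K * γ * L ^ 2 / 2 * (2 * γ * n / (L * K) * SG + 2 * γ * σ2 / (L * B)) := by gcongr
    _ = _ := by field_simp
  have hγnL : 8 * γ * n * L ≤ 1 := by
    rw [le_div_iff₀ (by positivity)] at hγle
    linarith
  have habsorb : 2 * (γ ^ 2 * L * n) * SG ≤ γ / 4 * SG := by
    gcongr
    · exact sum_nonneg fun k _ => hG k
    · nlinarith
  calc 1 / K * ∑ k ∈ range K, a k = 2 / (γ * K) * (γ / 2 * ∑ k ∈ range K, a k) := by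
        field_simp
    _ ≤ 2 / (γ * K) * (F 0 - Fstar + K * (5 * γ ^ 2 * L * σ2 / (2 * B))) := by
        gcongr
        linear_combination hdesc_sum + hSR + habsorb
          + mul_le_mul_of_nonneg_left hT (by positivity : 0 ≤ γ ^ 2 * L)
    _ = _ := by field_simp

/-- Abstract convergence argument for delay-controlled asynchronous SGD:
combining the descent inequality (i) and residual bound (ii) yields
`(1/K)∑ a_k ≤ 2(F_0 − F_*)/(γK) + 5γLσ²/B`. -/
theorem abstract_convergence
    (n K : ℕ) (hn : 1 ≤ n) (hK : 1 ≤ K)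
    (γ L σ2 B Fstar : ℝ) (hγ : 0 < γ) (hL : 0 < L) (hσ : 0 ≤ σ2) (hB : 0 < B)
    (hγle : γ ≤ 1 / (8 * n * L))
    (F a G R : ℕ → ℝ)
    (hF : ∀ k, Fstar ≤ F k)
    (ha : ∀ k, 0 ≤ a k) (hG : ∀ k, 0 ≤ G k) (hR : ∀ k, 0 ≤ R k)
    (hdesc : ∀ k, k ≤ K - 1 →
      F (k + 1) ≤ F k - (γ / 2) * a k - (γ / 4) * G k + (γ * L ^ 2 / 2) * R k
        + 3 * γ ^ 2 * L * σ2 / (2 * B)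
        + γ ^ 2 * L * ∑ ℓ ∈ Finset.Ico (k - k % n) k, G ℓ)
    (hres : (1 / (K : ℝ)) * ∑ k ∈ Finset.range K, R k
      ≤ (2 * γ * n / (L * K)) * ∑ k ∈ Finset.range K, G k
        + 2 * γ * σ2 / (L * B)) :
    (1 / (K : ℝ)) * ∑ k ∈ Finset.range K, a k
      ≤ 2 * (F 0 - Fstar) / (γ * K) + 5 * γ * L * σ2 / B :=
  abstract_convergence_general n K hn hK γ L σ2 B Fstar hγ hL hγle F a G R hF hG hdesc hres
end

section
/- Let n ≥ 1 and K ≥ 1 be integers, and let L, B, ε > 0, σ² > 0, F_* ∈ ℝ be reals. Set γ := min{1/(8nL), εB/(10Lσ²)}. Let F : ℕ → ℝ satisfy F_k ≥ F_* for all k, set Δ := F_0 − F_*, and suppose Δ > 0 and K ≥ 32nLΔ/ε + 40LΔσ²/(Bε²). Let a, G, R : ℕ → ℝ be nonnegative sequences such that: (i) for all k with 0 ≤ k ≤ K−1, F_{k+1} ≤ F_k − (γ/2) a_k − (γ/4) G_k + (γL²/2) R_k + 3γ²Lσ²/(2B) + γ²L ∑_{ℓ = k − (k mod n)}^{k−1}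 G_ℓ; and (ii) (1/K) ∑_{k=0}^{K−1} R_k ≤ (2γn/(LK)) ∑_{k=0}^{K−1} G_k + 2γσ²/(LB). Then (1/K) ∑_{k=0}^{K−1} a_k ≤ ε. -/
open scoped BigOperators

set_option maxHeartbeats 1600000 in
/-- Iteration-complexity theorem for delay-controlled asynchronous SGD in
abstract form: with stepsize `γ = min{1/(8nL), εB/(10Lσ²)}` and
`K ≥ 32nLΔ/ε + 40LΔσ²/(Bε²)`, the descent inequality (i) and residual bound (ii) imply
`(1/K)∑_{k<K} a_k ≤ ε`. -/
theorem iteration_complexity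
    (n K : ℕ) (hn : 1 ≤ n) (hK : 1 ≤ K)
    (L B ε σ2 Fstar : ℝ)
    (hL : 0 < L) (hB : 0 < B) (hε : 0 < ε) (hσ : 0 < σ2)
    (γ : ℝ) (hγdef : γ = min (1 / (8 * n * L)) (ε * B / (10 * L * σ2)))
    (F : ℕ → ℝ) (hF : ∀ k, Fstar ≤ F k)
    (Δ : ℝ) (hΔdef : Δ = F 0 - Fstar) (hΔ : 0 < Δ)
    (hKlarge : (K : ℝ) ≥ 32 * n * L * Δ / ε + 40 * L * Δ * σ2 / (B * ε ^ 2))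
    (a G R : ℕ → ℝ)
    (ha : ∀ k, 0 ≤ a k) (hG : ∀ k, 0 ≤ G k) (hR : ∀ k, 0 ≤ R k)
    (hdesc : ∀ k, k ≤ K - 1 →
      F (k + 1) ≤ F k - (γ / 2) * a k - (γ / 4) * G k + (γ * L ^ 2 / 2) * R k
        + 3 * γ ^ 2 * L * σ2 / (2 * B)
        + γ ^ 2 * L * ∑ ℓ ∈ Finset.Ico (k - k % n) k, G ℓ)
    (hres : (1 / (K : ℝ)) * ∑ k ∈ Finset.range K, R k
      ≤ (2 * γ * n / (L * K)) * ∑ k ∈ Finset.range K, G k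
        + 2 * γ * σ2 / (L * B)) :
    (1 / (K : ℝ)) * ∑ k ∈ Finset.range K, a k ≤ ε := by
  have hn' : (1:ℝ) ≤ (n:ℝ) := by exact_mod_cast hn
  have hn0 : (0:ℝ) < (n:ℝ) := by linarith
  have hK0 : (0:ℝ) < (K:ℝ) := by exact_mod_cast hK
  set A : ℝ := 1 / (8 * (n:ℝ) * L) with hA
  set C : ℝ := ε * B / (10 * L * σ2) with hC
  have hApos : 0 < A := by positivity
  have hCpos : 0 < C := by positivity
  have hγpos : 0 < γ := by rw [hγdef]; exact lt_min hApos hCpos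
  have hγA : γ ≤ A := hγdef ▸ min_le_left _ _
  have hγC : γ ≤ C := hγdef ▸ min_le_right _ _
  clear_value A C
  set Sa : ℝ := ∑ k ∈ Finset.range K, a k with hSa
  set SG : ℝ := ∑ k ∈ Finset.range K, G k with hSG
  set SR : ℝ := ∑ k ∈ Finset.range K, R k with hSR
  have hSa0 : 0 ≤ Sa := Finset.sum_nonneg fun k _ => ha k
  have hSG0 : 0 ≤ SG := Finset.sum_nonneg fun k _ => hG k
  have hSR0 : 0 ≤ SR := Finset.sum_nonneg fun k _ => hR k
  clear_value Sa SG SR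
  -- double sum bound
  set D : ℝ := ∑ k ∈ Finset.range K, ∑ ℓ ∈ Finset.Ico (k - k % n) k, G ℓ with hD
  have hD0 : 0 ≤ D :=
    Finset.sum_nonneg fun k _ => Finset.sum_nonneg fun ℓ _ => hG ℓ
  clear_value D
  have hdouble : D ≤ (n:ℝ) * SG := by
    have hswap : D = ∑ ℓ ∈ Finset.range K,
        ∑ k ∈ (Finset.range K).filter (fun k => k - k % n ≤ ℓ ∧ ℓ < k), G ℓ := by
      rw [hD]
      refine Finset.sum_comm' ?_
      intro k ℓ
      simp only [Finset.mem_range, Finset.mem_Ico, Finset.mem_filter]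
      constructor
      · rintro ⟨hk, h1, h2⟩
        exact ⟨⟨hk, h1, h2⟩, lt_trans h2 hk⟩
      · rintro ⟨⟨hk, h1, h2⟩, _⟩
        exact ⟨hk, h1, h2⟩
    rw [hswap, hSG, Finset.mul_sum]
    apply Finset.sum_le_sum
    intro ℓ _
    rw [Finset.sum_const, nsmul_eq_mul]
    have hcard : ((Finset.range K).filter (fun k => k - k % n ≤ ℓ ∧ ℓ < k)).card ≤ n := by
      have hsub : (Finset.range K).filter (fun k => k - k % n ≤ ℓ ∧ ℓ < k)
          ⊆ Finset.Ico (ℓ + 1) (ℓ + n) := by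
        intro k hk
        simp only [Finset.mem_filter, Finset.mem_range] at hk
        have hmod : k % n < n := Nat.mod_lt _ hn
        simp only [Finset.mem_Ico]
        omega
      calc ((Finset.range K).filter (fun k => k - k % n ≤ ℓ ∧ ℓ < k)).card
          ≤ (Finset.Ico (ℓ + 1) (ℓ + n)).card := Finset.card_le_card hsub
        _ = ℓ + n - (ℓ + 1) := Nat.card_Ico _ _
        _ ≤ n := by omega
    have : (((Finset.range K).filter (fun k => k - k % n ≤ ℓ ∧ ℓ < k)).card : ℝ)
        ≤ (n : ℝ) := by exact_mod_cast hcard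
    exact mul_le_mul_of_nonneg_right this (hG ℓ)
  -- telescoping
  have htel : F 0 - F K = ∑ k ∈ Finset.range K, (F k - F (k + 1)) :=
    (Finset.sum_range_sub' F K).symm
  have hsum : ∑ k ∈ Finset.range K,
      ((γ / 2) * a k + (γ / 4) * G k - (γ * L ^ 2 / 2) * R k
        - 3 * γ ^ 2 * L * σ2 / (2 * B)
        - γ ^ 2 * L * ∑ ℓ ∈ Finset.Ico (k - k % n) k, G ℓ)
      ≤ F 0 - F K := by
    rw [htel]
    apply Finset.sum_le_sum
    intro k hk
    rw [Finset.mem_range] at hk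
    have hk' : k ≤ K - 1 := by omega
    have := hdesc k hk'
    linarith
  have hsplit : ∑ k ∈ Finset.range K,
      ((γ / 2) * a k + (γ / 4) * G k - (γ * L ^ 2 / 2) * R k
        - 3 * γ ^ 2 * L * σ2 / (2 * B)
        - γ ^ 2 * L * ∑ ℓ ∈ Finset.Ico (k - k % n) k, G ℓ)
      = (γ / 2) * Sa + (γ / 4) * SG - (γ * L ^ 2 / 2) * SR
        - (K : ℝ) * (3 * γ ^ 2 * L * σ2 / (2 * B)) - γ ^ 2 * L * D := by
    simp only [Finset.sum_sub_distrib, Finset.sum_add_distrib, ← Finset.mul_sum,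
      Finset.sum_const, nsmul_eq_mul, Finset.card_range, hSa, hSG, hSR, hD]
  rw [hsplit] at hsum
  have hΔbd : F 0 - F K ≤ Δ := by
    have := hF K
    linarith [hΔdef]
  -- residual bound, cleared of denominators
  have hres' : SR ≤ 2 * γ * (n:ℝ) / L * SG + 2 * γ * σ2 * (K:ℝ) / (L * B) := by
    have h2 := mul_le_mul_of_nonneg_left hres hK0.le
    have hKne : (K:ℝ) ≠ 0 := ne_of_gt hK0
    have e1 : (K:ℝ) * ((1 / (K:ℝ)) * SR) = SR := by field_simp
    have e2 : (K:ℝ) * ((2 * γ * (n:ℝ) / (L * (K:ℝ))) * SG + 2 * γ * σ2 / (L * B))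
        = 2 * γ * (n:ℝ) / L * SG + 2 * γ * σ2 * (K:ℝ) / (L * B) := by
      field_simp
    rw [e1, e2] at h2
    exact h2
  -- combine: (γ/2) * Sa ≤ Δ + (5/2) γ² L σ2 K / B
  have hγ8 : γ * (8 * (n:ℝ) * L) ≤ 1 := by
    have h8 : (0:ℝ) < 8 * (n:ℝ) * L := by positivity
    calc γ * (8 * (n:ℝ) * L) ≤ A * (8 * (n:ℝ) * L) :=
          mul_le_mul_of_nonneg_right hγA h8.le
      _ = 1 := by rw [hA]; field_simp
  have hmid : (γ * L ^ 2 / 2) * SR ≤ γ ^ 2 * L * (n:ℝ) * SG + γ ^ 2 * L * σ2 * (K:ℝ) / B := by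
    have hc : 0 ≤ γ * L ^ 2 / 2 := by positivity
    have := mul_le_mul_of_nonneg_left hres' hc
    have e3 : γ * L ^ 2 / 2 * (2 * γ * (n:ℝ) / L * SG + 2 * γ * σ2 * (K:ℝ) / (L * B))
        = γ ^ 2 * L * (n:ℝ) * SG + γ ^ 2 * L * σ2 * (K:ℝ) / B := by
      field_simp
    linarith [e3 ▸ this]
  have hGcancel : γ ^ 2 * L * D + γ ^ 2 * L * (n:ℝ) * SG ≤ (γ / 4) * SG := by
    have hγLn : 0 ≤ γ ^ 2 * L := by positivity
    have h1 : γ ^ 2 * L * D ≤ γ ^ 2 * L * ((n:ℝ) * SG) :=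
      mul_le_mul_of_nonneg_left hdouble hγLn
    have h2 : 2 * (γ ^ 2 * L * (n:ℝ)) * SG ≤ (γ / 4) * SG := by
      apply mul_le_mul_of_nonneg_right _ hSG0
      calc 2 * (γ ^ 2 * L * (n:ℝ)) = γ / 4 * (γ * (8 * (n:ℝ) * L)) := by ring
        _ ≤ γ / 4 * 1 := mul_le_mul_of_nonneg_left hγ8 (by positivity)
        _ = γ / 4 := mul_one _
    linarith [h1, h2]
  have hkey : (γ / 2) * Sa ≤ Δ + (5 / 2) * γ ^ 2 * L * σ2 * (K:ℝ) / B := by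
    have e6 : (K:ℝ) * (3 * γ ^ 2 * L * σ2 / (2 * B)) + γ ^ 2 * L * σ2 * (K:ℝ) / B
        = (5 / 2) * γ ^ 2 * L * σ2 * (K:ℝ) / B := by
      field_simp; ring
    linarith [hsum, hΔbd, hmid, hGcancel, e6]
  -- step bounds
  have hstep2 : 5 * γ * L * σ2 / B ≤ ε / 2 := by
    have : γ * (10 * L * σ2) ≤ ε * B := by
      have h10 : (0:ℝ) < 10 * L * σ2 := by positivity
      calc γ * (10 * L * σ2) ≤ C * (10 * L * σ2) :=
            mul_le_mul_of_nonneg_right hγC h10.le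
        _ = ε * B := by rw [hC]; field_simp
    rw [div_le_div_iff₀ hB (by norm_num : (0:ℝ) < 2)]
    linarith [this]
  have hstep1 : 4 * Δ ≤ ε * γ * (K:ℝ) := by
    have hinv : 1 / γ ≤ 1 / A + 1 / C := by
      rcases le_total A C with h | h
      · have : γ = A := by rw [hγdef, min_eq_left h]
        rw [this]
        have : 0 ≤ 1 / C := by positivity
        linarith
      · have : γ = C := by rw [hγdef, min_eq_right h]
        rw [this]
        have : 0 ≤ 1 / A := by positivity
        linarith
    have hKge : (K:ℝ) ≥ 4 * Δ / ε * (1 / A + 1 / C) := by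
      have e4 : 4 * Δ / ε * (1 / A + 1 / C)
          = 32 * (n:ℝ) * L * Δ / ε + 40 * L * Δ * σ2 / (B * ε ^ 2) := by
        rw [hA, hC]
        field_simp
        ring
      linarith [e4 ▸ hKlarge]
    have h4Δε : 0 ≤ 4 * Δ / ε := by positivity
    have hKγ : (K:ℝ) ≥ 4 * Δ / ε * (1 / γ) := by
      have := mul_le_mul_of_nonneg_left hinv h4Δε
      linarith
    have : 4 * Δ / ε * (1 / γ) * (ε * γ) ≤ (K:ℝ) * (ε * γ) := by
      apply mul_le_mul_of_nonneg_right hKγ (by positivity)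
    have e5 : 4 * Δ / ε * (1 / γ) * (ε * γ) = 4 * Δ := by
      field_simp
    linarith [this, e5]
  -- finish
  have hSaK : Sa ≤ ε * (K:ℝ) := by
    have h6 : Δ + (5 / 2) * γ ^ 2 * L * σ2 * (K:ℝ) / B ≤ (γ / 2) * (ε * (K:ℝ)) := by
      have hb : (5 / 2) * γ ^ 2 * L * σ2 * (K:ℝ) / B
          = (γ * (K:ℝ) / 2) * (5 * γ * L * σ2 / B) := by
        ring
      have hγK : 0 ≤ γ * (K:ℝ) / 2 := by positivity
      have := mul_le_mul_of_nonneg_left hstep2 hγK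
      linarith [hstep1, this]
    have := le_trans hkey h6
    have hγ2 : 0 < γ / 2 := by positivity
    exact le_of_mul_le_mul_left (by linarith [mul_comm (γ/2) Sa]) hγ2
  have hKne : (K:ℝ) ≠ 0 := ne_of_gt hK0
  calc (1 / (K:ℝ)) * Sa ≤ (1 / (K:ℝ)) * (ε * (K:ℝ)) :=
        mul_le_mul_of_nonneg_left hSaK (by positivity)
    _ = ε := by field_simp
end
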